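/- Let y be a truncated multi-sequence of degree 2ℓ in n variables with y_0 = 1 (the entry at the zero multi-index), and suppose the moment matrix M_ℓ[y] is positive semidefinite of rank 1. Define u ∈ ℝⁿ by u_i := y_{e_i}, where e_i is the i-th standard unit multi-index. Then y is the evaluation tms of u: y_α = u^α = u₁^{α₁}⋯u_n^{αₙ} for every α with |α| ≤ 2ℓ. -/

import Mathlib

open MvPolynomial

/-- Multi-indices `α ∈ ℕⁿ` with `|α| ≤ d`, indexing the monomial vector `[x]_d`. -/
abbrev MIdx (n d : ℕ) := {α : Fin n → Fin (d + 1) // ∑ i, (α i : ℕ) ≤ d}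

/-- The `d`-th moment matrix of a truncated multi-sequence `y`,
with entries `(M_d[y])_{α,β} = y_{α+β}`. -/
noncomputable def momentMatrix {n : ℕ} (d : ℕ) (y : (Fin n → ℕ) → ℝ) :
    Matrix (MIdx n d) (MIdx n d) ℝ :=
  Matrix.of fun α β => y fun i => (α.1 i : ℕ) + (β.1 i : ℕ)

/-- `ℓ_g = ⌈(2ℓ − deg g)/2⌉`, the truncation degree of the localizing matrix of `g`. -/
def locDeg {n : ℕ} (ℓ : ℕ) (g : MvPolynomial (Fin n) ℝ) : ℕ :=
  (2 * ℓ - g.totalDegree + 1) / 2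

/-- The `ℓ`-th localizing matrix of `g` generated by `y`,
with entries `Σ_γ g_γ y_{α+β+γ}` for `|α|, |β| ≤ ℓ_g`. -/
noncomputable def locMatrix {n : ℕ} (ℓ : ℕ) (g : MvPolynomial (Fin n) ℝ)
    (y : (Fin n → ℕ) → ℝ) :
    Matrix (MIdx n (locDeg ℓ g)) (MIdx n (locDeg ℓ g)) ℝ :=
  Matrix.of fun α β =>
    ∑ γ ∈ g.support, g.coeff γ * y fun i => (α.1 i : ℕ) + (β.1 i : ℕ) + γ i

/-- The Riesz functional of `y` applied to a polynomial `p`: `L_y(p) = Σ_α p_α y_α`. -/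
noncomputable def riesz {n : ℕ} (y : (Fin n → ℕ) → ℝ) (p : MvPolynomial (Fin n) ℝ) : ℝ :=
  ∑ γ ∈ p.support, p.coeff γ * y fun i => γ i

/-- The evaluation truncated multi-sequence of a point `u`: `y_α = u^α`. -/
noncomputable def evalTms {n : ℕ} (u : Fin n → ℝ) : (Fin n → ℕ) → ℝ :=
  fun α => ∏ i, u i ^ α i

/-- The monomial vector `[u]_d` of all monomials `u^α` with `|α| ≤ d`. -/
noncomputable def monVec {n : ℕ} (d : ℕ) (u : Fin n → ℝ) : MIdx n d → ℝ :=
  fun α => ∏ i, u i ^ (α.1 i : ℕ)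

/-!
In a matrix of rank one every `2 × 2` minor vanishes. Applied to the minor of `M_ℓ[y]` on the
rows `α, 0` and columns `β, 0`, with `y₀ = 1`, this gives `y_{α+β} = y_α y_β` whenever
`|α|, |β| ≤ ℓ`. Peeling off one unit multi-index at a time yields `y_α = u^α` for `|α| ≤ ℓ`, and
every `α` with `|α| ≤ 2ℓ` is a sum of two multi-indices of degree at most `ℓ`.
-/

theorem Matrix.mul_apply_eq_of_rank_le_one {m n K : Type*} [Field K] [Fintype n]
    {A : Matrix m n K} (hA : A.rank ≤ 1) (i k : m) (j l : n) :
    A i j * A k l = A i l * A k j := by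
  by_contra h
  have hdet : (A.submatrix ![i, k] ![j, l]).det ≠ 0 := by
    rw [Matrix.det_fin_two]
    simpa [sub_eq_zero] using h
  have hminor := (A.submatrix ![i, k] ![j, l]).rank_of_isUnit
    ((Matrix.isUnit_iff_isUnit_det _).mpr hdet.isUnit)
  have hle := A.rank_submatrix_le ![i, k] ![j, l]
  simp only [Fintype.card_fin] at hminor
  omega

theorem exists_add_eq_of_sum_le_two_mul {n ℓ : ℕ} {α : Fin n → ℕ} (hα : ∑ i, α i ≤ 2 * ℓ) :
    ∃ β γ : Fin n → ℕ, β + γ = α ∧ ∑ i, β i ≤ ℓ ∧ ∑ i, γ i ≤ ℓ := by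
  have hdeg : (Finsupp.equivFunOnFinite.symm α).degree = ∑ i, α i := by
    simp [Finsupp.degree_eq_sum]
  obtain ⟨β, hβα, hβ⟩ := (Finsupp.equivFunOnFinite.symm α).exists_le_degree_eq
    (min ℓ (∑ i, α i)) (hdeg ▸ min_le_right _ _)
  rw [Finsupp.degree_eq_sum] at hβ
  have hsplit : ⇑β + (α - β) = α := add_tsub_cancel_of_le fun i => hβα i
  have hsum : ∑ i, β i + ∑ i, (α - β) i = ∑ i, α i := by
    rw [← Finset.sum_add_distrib]
    exact Finset.sum_congr rfl fun i _ => congrFun hsplit i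
  exact ⟨β, α - β, hsplit, by omega, by omega⟩

theorem prod_pow_add_single {M : Type*} [CommMonoid M] {n : ℕ} (u : Fin n → M)
    (β : Fin n → ℕ) (i : Fin n) :
    ∏ j, u j ^ (β + Pi.single i 1 : Fin n → ℕ) j = (∏ j, u j ^ β j) * u i := by
  simp only [Pi.add_apply, pow_add, Finset.prod_mul_distrib]
  congr 1
  rw [Fintype.prod_eq_single i fun j hj => by simp [hj]]
  simp

section MultiplicativeUpToDegree

variable {M : Type*} [CommMonoid M] {n ℓ : ℕ} {f : (Fin n → ℕ) → M}

theorem eq_prod_pow_of_map_add_of_sum_le (h0 : f 0 = 1)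
    (hadd : ∀ a b, ∑ i, a i ≤ ℓ → ∑ i, b i ≤ ℓ → f (a + b) = f a * f b)
    {α : Fin n → ℕ} (hα : ∑ i, α i ≤ ℓ) : f α = ∏ i, f (Pi.single i 1) ^ α i := by
  obtain ⟨k, hk⟩ : ∃ k, ∑ i, α i = k := ⟨_, rfl⟩
  induction k generalizing α with
  | zero =>
    obtain rfl : α = 0 := funext fun i => Finset.sum_eq_zero_iff.mp hk i (Finset.mem_univ i)
    simp [h0]
  | succ k ih =>
    obtain ⟨i, hi⟩ : ∃ i, α i ≠ 0 := by
      by_contra! h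
      simp [h] at hk
    set β := α - Pi.single i 1
    have hβα : β + Pi.single i 1 = α := by
      funext j
      rcases eq_or_ne j i with rfl | hj
      · simp only [Pi.add_apply, Pi.sub_apply, Pi.single_eq_same, β]; omega
      · simp [β, hj]
    have hβ : ∑ j, β j = k := by
      have := congrArg (fun γ : Fin n → ℕ => ∑ j, γ j) hβα
      simp only [Pi.add_apply, Finset.sum_add_distrib, Finset.sum_pi_single', Finset.mem_univ,
        if_true] at this
      omega
    have hsingle : ∑ j, (Pi.single i 1 : Fin n → ℕ) j ≤ ℓ := by
      simp only [Finset.sum_pi_single', Finset.mem_univ, if_true]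
      omega
    rw [← hβα, hadd β _ (by omega) hsingle, ih (by omega) hβ, prod_pow_add_single]

theorem eq_prod_pow_of_map_add_of_sum_le_two_mul (h0 : f 0 = 1)
    (hadd : ∀ a b, ∑ i, a i ≤ ℓ → ∑ i, b i ≤ ℓ → f (a + b) = f a * f b)
    {α : Fin n → ℕ} (hα : ∑ i, α i ≤ 2 * ℓ) : f α = ∏ i, f (Pi.single i 1) ^ α i := by
  obtain ⟨β, γ, rfl, hβ, hγ⟩ := exists_add_eq_of_sum_le_two_mul hα
  simp only [hadd β γ hβ hγ, eq_prod_pow_of_map_add_of_sum_le h0 hadd hβ,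
    eq_prod_pow_of_map_add_of_sum_le h0 hadd hγ, Pi.add_apply, pow_add,
    Finset.prod_mul_distrib]

end MultiplicativeUpToDegree

def MIdx.ofFun {n d : ℕ} (a : Fin n → ℕ) (ha : ∑ i, a i ≤ d) : MIdx n d :=
  ⟨fun i => ⟨a i, Nat.lt_succ_of_le <|
    (Finset.single_le_sum (fun j _ => Nat.zero_le (a j)) (Finset.mem_univ i)).trans ha⟩, ha⟩

theorem momentMatrix_ofFun {n d : ℕ} (y : (Fin n → ℕ) → ℝ) {a b : Fin n → ℕ}
    (ha : ∑ i, a i ≤ d) (hb : ∑ i, b i ≤ d) :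
    momentMatrix d y (MIdx.ofFun a ha) (MIdx.ofFun b hb) = y (a + b) :=
  rfl

theorem moment_add_of_rank_momentMatrix_le_one {n ℓ : ℕ} {y : (Fin n → ℕ) → ℝ} (h0 : y 0 = 1)
    (hrank : (momentMatrix ℓ y).rank ≤ 1) {a b : Fin n → ℕ} (ha : ∑ i, a i ≤ ℓ)
    (hb : ∑ i, b i ≤ ℓ) : y (a + b) = y a * y b := by
  have hz : ∑ i, (0 : Fin n → ℕ) i ≤ ℓ := by simp
  have hminor := Matrix.mul_apply_eq_of_rank_le_one hrank (MIdx.ofFun a ha) (MIdx.ofFun 0 hz)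
    (MIdx.ofFun b hb) (MIdx.ofFun 0 hz)
  simpa only [momentMatrix_ofFun, add_zero, zero_add, h0, mul_one] using hminor

theorem rank_one_moment_matrix_is_evaluation_general {n ℓ : ℕ} (y : (Fin n → ℕ) → ℝ)
    (h0 : y 0 = 1)
    (hrank : (momentMatrix ℓ y).rank = 1) :
    ∀ α : Fin n → ℕ, ∑ i, α i ≤ 2 * ℓ →
      y α = ∏ i, y (Pi.single i 1) ^ α i :=
  fun _ hα => eq_prod_pow_of_map_add_of_sum_le_two_mul h0
    (fun _ _ => moment_add_of_rank_momentMatrix_le_one h0 hrank.le) hα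

/-- if `y₀ = 1` and the moment matrix `M_ℓ[y]` is PSD of rank 1,
then `y` is the evaluation tms of the point `u` with `uᵢ = y_{eᵢ}`:
`y_α = u^α` for all `|α| ≤ 2ℓ`. -/
theorem rank_one_moment_matrix_is_evaluation {n ℓ : ℕ} (y : (Fin n → ℕ) → ℝ)
    (h0 : y 0 = 1) (hpsd : (momentMatrix ℓ y).PosSemidef)
    (hrank : (momentMatrix ℓ y).rank = 1) :
    ∀ α : Fin n → ℕ, ∑ i, α i ≤ 2 * ℓ →
      y α = ∏ i, y (Pi.single i 1) ^ α i :=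
  rank_one_moment_matrix_is_evaluation_general y h0 hrank
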